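/- As ξ → 0 along real ξ ∈ (0,1), the matrix exp(−(2πi)^{−1} log(ξ) · (−N_0 + N_1)) · M′(ξ) converges to the identity matrix I, where exp is the matrix exponential. -/

import Mathlib

open Complex

noncomputable section

/-- The nilpotent endomorphism `N₀` (as a matrix, 0-based indices):
`N₀ e_j = e_{j-1}` for `1 ≤ j ≤ n-1` (paper: `2 ≤ j ≤ n`), `N₀ e_0 = N₀ e_n = 0`. -/
def N0 (n : ℕ) : Matrix (Fin (n + 1)) (Fin (n + 1)) ℂ :=
  fun i j => if (i : ℕ) + 1 = (j : ℕ) ∧ (j : ℕ) < n then 1 else 0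

/-- The nilpotent endomorphism `N₁` (0-based indices): `N₁ e_n = -e_{n-1}`
(paper: `N₁ e_{n+1} = -e_n`), and `N₁ e_j = 0` otherwise. -/
def N1 (n : ℕ) : Matrix (Fin (n + 1)) (Fin (n + 1)) ℂ :=
  fun i j => if (i : ℕ) + 1 = n ∧ (j : ℕ) = n then -1 else 0

/-- `ad N₀` acting on matrices: `(ad N₀)(M) = N₀ M - M N₀`. -/
def adN0 (n : ℕ) : Matrix (Fin (n + 1)) (Fin (n + 1)) ℂ → Matrix (Fin (n + 1)) (Fin (n + 1)) ℂ :=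
  fun M => N0 n * M - M * N0 n

/-- The polylogarithm `Li_j(x) = ∑_{k≥1} x^k / k^j`, for `|x| < 1`. -/
def Li (j : ℕ) (x : ℂ) : ℂ := ∑' k : ℕ, x ^ (k + 1) / ((k : ℂ) + 1) ^ j

/-- The slit open unit disc `U = {x : |x| < 1, x ∉ ℝ_{≤0}}`. -/
def U : Set ℂ := {x | ‖x‖ < 1 ∧ ¬(x.im = 0 ∧ x.re ≤ 0)}


/-- The matrix `M′(ξ)` (0-based indices): diagonal entries `1`,
`M′(ξ)_{i,j} = (-(2πi)⁻¹ log ξ)^{j-i}/(j-i)!` for `i < j < n`,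
`M′(ξ)_{i,n} = (-(2πi)⁻¹ log ξ)^{n-i}/(n-i)! + (-(2πi)⁻¹)^{n-i} Li_{n-i}(ξ)` for `i < n`. -/
def Mmat' (n : ℕ) (ξ : ℂ) : Matrix (Fin (n + 1)) (Fin (n + 1)) ℂ := fun i j =>
  if i = j then 1
  else if (i : ℕ) < (j : ℕ) ∧ (j : ℕ) < n then
    (-((2 * (Real.pi : ℂ) * I)⁻¹) * Complex.log ξ) ^ ((j : ℕ) - (i : ℕ)) /
      ((j : ℕ) - (i : ℕ)).factorial
  else if (i : ℕ) < (j : ℕ) ∧ (j : ℕ) = n then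
    (-((2 * (Real.pi : ℂ) * I)⁻¹) * Complex.log ξ) ^ (n - (i : ℕ)) / (n - (i : ℕ)).factorial +
      (-((2 * (Real.pi : ℂ) * I)⁻¹)) ^ (n - (i : ℕ)) * Li (n - (i : ℕ)) ξ
  else 0

/-! Writing `J` for the upper shift matrix, `-N₀ + N₁ = -J` and
`M′(ξ) = exp(-(2πi)⁻¹ log ξ • J) + P(ξ)`, where `P(ξ)` holds the polylogarithm terms of the last
column. The product therefore equals `1 + exp((2πi)⁻¹ log ξ • J) P(ξ)`. Since `J` is nilpotent,
the entries of the exponential are polynomials in `log ξ`, while `Li_p(ξ) = O(ξ)` and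
`(log ξ)^m ξ → 0` as `ξ → 0⁺`. -/

open Filter Topology Asymptotics

theorem Matrix.exp_mul_exp_neg {m 𝔸 : Type*} [Fintype m] [DecidableEq m] [NormedRing 𝔸]
    [NormedAlgebra ℚ 𝔸] [CompleteSpace 𝔸] (A : Matrix m m 𝔸) :
    NormedSpace.exp A * NormedSpace.exp (-A) = 1 := by
  rw [← Matrix.exp_add_of_commute A (-A) (Commute.refl A).neg_right, add_neg_cancel,
    NormedSpace.exp_zero]

theorem Real.tendsto_pow_log_mul_nhdsGT_zero (m : ℕ) :
    Tendsto (fun x : ℝ => Real.log x ^ m * x) (𝓝[>] 0) (𝓝 0) := by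
  have h := (isLittleO_abs_log_rpow_rpow_nhdsGT_zero (m : ℝ) neg_one_lt_zero).mul_isBigO
    (isBigO_refl (fun x : ℝ => x) _)
  rw [← isLittleO_one_iff ℝ]
  refine (h.congr' ?_ ?_).of_norm_left
  · filter_upwards [self_mem_nhdsWithin] with x (hx : 0 < x)
    simp [abs_of_pos hx]
  · filter_upwards [self_mem_nhdsWithin] with x (hx : 0 < x)
    rw [Real.rpow_neg_one, inv_mul_cancel₀ hx.ne']

def upperShift (R : Type*) [Zero R] [One R] (n : ℕ) : Matrix (Fin (n + 1)) (Fin (n + 1)) R :=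
  Matrix.of fun i j => if (i : ℕ) + 1 = j then 1 else 0

theorem upperShift_pow_apply {R : Type*} [Semiring R] (n k : ℕ) (i j : Fin (n + 1)) :
    (upperShift R n ^ k) i j = if (i : ℕ) + k = j then 1 else 0 := by
  induction k generalizing j with
  | zero => simp [Matrix.one_apply, Fin.ext_iff]
  | succ k ih =>
    rw [pow_succ, Matrix.mul_apply]
    simp_rw [ih]
    simp only [upperShift, Matrix.of_apply, ite_mul, one_mul, zero_mul]
    by_cases h : (i : ℕ) + k < n + 1
    · rw [Fintype.sum_eq_single ⟨i + k, h⟩ fun x hx => if_neg fun e => hx (Fin.ext e.symm)]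
      simp [add_assoc]
    · rw [if_neg (by omega)]
      exact Finset.sum_eq_zero fun x _ => if_neg (by have := x.isLt; omega)

theorem upperShift_pow_eq_zero (R : Type*) [Semiring R] (n : ℕ) :
    upperShift R n ^ (n + 1) = 0 := by
  ext i j
  rw [upperShift_pow_apply, if_neg (by omega), Matrix.zero_apply]

theorem NormedSpace.exp_eq_sum_range_of_pow_eq_zero (𝕂 : Type*) {𝔸 : Type*} [Field 𝕂]
    [CharZero 𝕂] [Ring 𝔸] [Algebra 𝕂 𝔸] [TopologicalSpace 𝔸] [IsTopologicalRing 𝔸]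
    {x : 𝔸} {m : ℕ} (hx : x ^ m = 0) :
    NormedSpace.exp x = ∑ k ∈ Finset.range m, (k.factorial⁻¹ : 𝕂) • x ^ k := by
  rw [NormedSpace.exp_eq_tsum 𝕂]
  exact tsum_eq_sum fun k hk => by
    rw [pow_eq_zero_of_le (by simpa using hk) hx, smul_zero]

theorem exp_smul_upperShift_apply (n : ℕ) (z : ℂ) (i j : Fin (n + 1)) :
    NormedSpace.exp (z • upperShift ℂ n) i j =
      if (i : ℕ) ≤ j then z ^ ((j : ℕ) - i) / ((j : ℕ) - i).factorial else 0 := by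
  rw [NormedSpace.exp_eq_sum_range_of_pow_eq_zero ℂ
    (by rw [smul_pow, upperShift_pow_eq_zero, smul_zero])]
  simp only [Matrix.sum_apply, Matrix.smul_apply, smul_pow, upperShift_pow_apply, smul_eq_mul,
    mul_ite, mul_one, mul_zero]
  split_ifs with hij
  · rw [Finset.sum_eq_single ((j : ℕ) - i)]
    · rw [if_pos (by omega), div_eq_mul_inv, mul_comm]
    · exact fun k _ hk => if_neg (by omega)
    · exact fun hk => absurd (Finset.mem_range.2 (by omega)) hk
  · exact Finset.sum_eq_zero fun k _ => if_neg (by omega)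

theorem neg_N0_add_N1_eq_neg_upperShift (n : ℕ) : -N0 n + N1 n = -upperShift ℂ n := by
  ext i j
  have := j.isLt
  simp only [Matrix.add_apply, Matrix.neg_apply, N0, N1, upperShift, Matrix.of_apply]
  split_ifs <;> first | omega | simp

def polylogPart (n : ℕ) (ξ : ℂ) : Matrix (Fin (n + 1)) (Fin (n + 1)) ℂ :=
  Matrix.of fun i j => if (i : ℕ) < n ∧ (j : ℕ) = n then
    (-((2 * (Real.pi : ℂ) * I)⁻¹)) ^ (n - (i : ℕ)) * Li (n - (i : ℕ)) ξ else 0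

theorem Mmat'_eq_exp_add_polylogPart (n : ℕ) (ξ : ℂ) :
    Mmat' n ξ =
      NormedSpace.exp ((-((2 * (Real.pi : ℂ) * I)⁻¹) * Complex.log ξ) • upperShift ℂ n) +
        polylogPart n ξ := by
  ext i j
  have := j.isLt
  simp only [Matrix.add_apply, exp_smul_upperShift_apply, Mmat', polylogPart, Matrix.of_apply,
    Fin.ext_iff]
  split_ifs <;> first | omega | simp_all

theorem norm_Li_le (p : ℕ) {x : ℂ} (hx : ‖x‖ < 1) : ‖Li p x‖ ≤ ‖x‖ * (1 - ‖x‖)⁻¹ := by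
  refine tsum_of_norm_bounded ((hasSum_geometric_of_lt_one (norm_nonneg x) hx).mul_left ‖x‖)
    fun k => ?_
  have hk : 1 ≤ ‖(k : ℂ) + 1‖ := by
    rw [← Nat.cast_succ, Complex.norm_natCast]
    exact_mod_cast k.succ_pos
  rw [norm_div, norm_pow, norm_pow, ← pow_succ']
  exact div_le_self (by positivity) (one_le_pow₀ hk)

theorem isBigO_Li (p : ℕ) : Li p =O[𝓝 0] id := by
  refine IsBigO.of_bound 2 ?_
  filter_upwards [Metric.ball_mem_nhds (0 : ℂ) one_half_pos] with x hx
  rw [mem_ball_zero_iff] at hx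
  calc ‖Li p x‖ ≤ ‖x‖ * (1 - ‖x‖)⁻¹ := norm_Li_le p (by linarith)
    _ ≤ ‖x‖ * 2 := by
      gcongr
      rw [inv_le_comm₀ (by linarith) two_pos]
      linarith
    _ = 2 * ‖id x‖ := mul_comm _ _

theorem tendsto_log_pow_mul_Li (m p : ℕ) :
    Tendsto (fun t : ℝ => Complex.log t ^ m * Li p t) (𝓝[>] 0) (𝓝 0) := by
  have hofReal : Tendsto (fun t : ℝ => (t : ℂ)) (𝓝[>] 0) (𝓝 0) :=
    (Complex.continuous_ofReal.tendsto' 0 0 Complex.ofReal_zero).mono_left nhdsWithin_le_nhds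
  have hlim : Tendsto (fun t : ℝ => Complex.log t ^ m * t) (𝓝[>] 0) (𝓝 0) := by
    have := (Complex.continuous_ofReal.tendsto' 0 0 Complex.ofReal_zero).comp
      (Real.tendsto_pow_log_mul_nhdsGT_zero m)
    refine this.congr' ?_
    filter_upwards [self_mem_nhdsWithin] with t (ht : 0 < t)
    simp [Complex.ofReal_log ht.le]
  exact ((isBigO_refl _ _).mul ((isBigO_Li p).comp_tendsto hofReal)).trans_tendsto hlim

theorem tendsto_exp_smul_upperShift_mul_polylogPart (n : ℕ) :
    Tendsto (fun t : ℝ =>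
        NormedSpace.exp (((2 * (Real.pi : ℂ) * I)⁻¹ * Complex.log t) • upperShift ℂ n) *
          polylogPart n t)
      (𝓝[>] 0) (𝓝 0) := by
  set c := (2 * (Real.pi : ℂ) * I)⁻¹
  refine tendsto_pi_nhds.2 fun i => tendsto_pi_nhds.2 fun j => ?_
  simp only [Matrix.mul_apply]
  have hentry : ∀ k : Fin (n + 1), Tendsto (fun t : ℝ =>
      NormedSpace.exp ((c * Complex.log t) • upperShift ℂ n) i k * polylogPart n t k j)
      (𝓝[>] 0) (𝓝 0) := by
    intro k
    have hfactor : ∃ a : ℂ, ∀ t : ℝ,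
        NormedSpace.exp ((c * Complex.log t) • upperShift ℂ n) i k * polylogPart n t k j =
          a * (Complex.log t ^ ((k : ℕ) - i) * Li (n - (k : ℕ)) t) := by
      refine ⟨(if (i : ℕ) ≤ k then c ^ ((k : ℕ) - i) / ((k : ℕ) - i).factorial else 0) *
          (if (k : ℕ) < n ∧ (j : ℕ) = n then (-c) ^ (n - (k : ℕ)) else 0), fun t => ?_⟩
      simp only [exp_smul_upperShift_apply, polylogPart, Matrix.of_apply]
      split_ifs <;> ring
    obtain ⟨a, ha⟩ := hfactor
    simpa [ha] using (tendsto_log_pow_mul_Li _ _).const_mul a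
  simpa using tendsto_finsetSum Finset.univ fun k _ => hentry k

theorem tendsto_exp_neg_log_Ninfty_mul_Mmat'_general (n : ℕ) :
    Filter.Tendsto
      (fun t : ℝ =>
        NormedSpace.exp
            ((-((2 * (Real.pi : ℂ) * I)⁻¹ * Complex.log (t : ℂ))) • (-N0 n + N1 n)) *
          Mmat' n (t : ℂ))
      (nhdsWithin 0 (Set.Ioo 0 1)) (nhds 1) := by
  have hsplit : ∀ t : ℝ,
      NormedSpace.exp ((-((2 * (Real.pi : ℂ) * I)⁻¹ * Complex.log t)) • (-N0 n + N1 n)) *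
          Mmat' n t =
        1 + NormedSpace.exp (((2 * (Real.pi : ℂ) * I)⁻¹ * Complex.log t) • upperShift ℂ n) *
          polylogPart n t := by
    intro t
    rw [neg_N0_add_N1_eq_neg_upperShift, neg_smul_neg, Mmat'_eq_exp_add_polylogPart, mul_add,
      neg_mul, neg_smul, Matrix.exp_mul_exp_neg]
  have hlim := (tendsto_const_nhds (x := (1 : Matrix (Fin (n + 1)) (Fin (n + 1)) ℂ))).add
    (tendsto_exp_smul_upperShift_mul_polylogPart n)
  rw [add_zero] at hlim
  rw [nhdsWithin_Ioo_eq_nhdsGT zero_lt_one]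
  exact hlim.congr fun t => (hsplit t).symm

/-- As `ξ → 0` along real `ξ ∈ (0,1)`,
`exp(-(2πi)⁻¹ log(ξ) · (-N₀ + N₁)) · M′(ξ)` converges to the identity matrix. -/
theorem tendsto_exp_neg_log_Ninfty_mul_Mmat' (n : ℕ) (hn : 1 ≤ n) :
    Filter.Tendsto
      (fun t : ℝ =>
        NormedSpace.exp
            ((-((2 * (Real.pi : ℂ) * I)⁻¹ * Complex.log (t : ℂ))) • (-N0 n + N1 n)) *
          Mmat' n (t : ℂ))
      (nhdsWithin 0 (Set.Ioo 0 1)) (nhds 1) :=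
  tendsto_exp_neg_log_Ninfty_mul_Mmat'_general n
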